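/- arXiv:2405.06420 — 3 statements merged into one kernel-verified Lean document; each statement's English description precedes it below -/
import Mathlib

section
/- Let f : ℝ → ℝ be 𝒜-continuous on [0,1], i.e. for every open G ⊆ ℝ the set {x ∈ [0,1] : f(x) ∈ G} equals O ∩ C where O is open and C is regular closed, both in the subspace topology of [0,1]. Then for every real q: there exists x ∈ [0,1] with f(x) > q if and only if there exists a rational r ∈ [0,1] with f(r) > q. -/
/-!
A nonempty set `O ∩ C` with `O` open and `C ⊆ closure (interior C)` contains the nonempty open set
`O ∩ interior C`, so it meets every dense set. The rationals are dense in `[0,1]` because `[0,1]`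
is itself the closure of its interior; apply this to the preimage of `(q, ∞)`.
-/

open Set

variable {X : Type*} [TopologicalSpace X] {D O C : Set X}

theorem Dense.exists_mem_open_inter_of_subset_closure_interior (hD : Dense D) (hO : IsOpen O)
    (hC : C ⊆ closure (interior C)) (hne : (O ∩ C).Nonempty) : ∃ d ∈ D, d ∈ O ∩ C := by
  obtain ⟨x, hxO, hxC⟩ := hne
  have hint : (O ∩ interior C).Nonempty := mem_closure_iff.mp (hC hxC) O hO hxO
  obtain ⟨d, hdD, hdO, hdC⟩ := hD.exists_mem_open (hO.inter isOpen_interior) hint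
  exact ⟨d, hdD, hdO, interior_subset hdC⟩

theorem Dense.preimage_val_of_subset_closure_interior (hD : Dense D)
    (hC : C ⊆ closure (interior C)) : Dense (Subtype.val ⁻¹' D : Set C) := by
  refine dense_iff_inter_open.mpr fun U hU ⟨y, hyU⟩ => ?_
  obtain ⟨V, hV, rfl⟩ := isOpen_induced_iff.mp hU
  obtain ⟨d, hdD, hdV, hdC⟩ :=
    hD.exists_mem_open_inter_of_subset_closure_interior hV hC ⟨y, hyU, y.2⟩
  exact ⟨⟨d, hdC⟩, hdV, hdD⟩

theorem AContinuous_sup_rational (f : ℝ → ℝ)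
    (hf : ∀ G : Set ℝ, IsOpen G →
      ∃ O C : Set (Set.Icc (0:ℝ) 1), IsOpen O ∧ C = closure (interior C) ∧
        ({x : Set.Icc (0:ℝ) 1 | f ↑x ∈ G} : Set (Set.Icc (0:ℝ) 1)) = O ∩ C) :
    ∀ q : ℝ, (∃ x ∈ Set.Icc (0:ℝ) 1, f x > q) ↔
      (∃ r : ℚ, (r : ℝ) ∈ Set.Icc (0:ℝ) 1 ∧ f r > q) := by
  intro q
  refine ⟨?_, fun ⟨r, hr, hfr⟩ => ⟨r, hr, hfr⟩⟩
  rintro ⟨x, hx, hfx⟩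
  obtain ⟨O, C, hO, hC, hOC⟩ := hf (Ioi q) isOpen_Ioi
  have hQ : Dense (Subtype.val ⁻¹' range ((↑) : ℚ → ℝ) : Set (Icc (0:ℝ) 1)) :=
    Rat.denseRange_cast.preimage_val_of_subset_closure_interior
      (closure_interior_Icc zero_ne_one).ge
  obtain ⟨⟨_, hr⟩, ⟨r, rfl⟩, hrOC⟩ :=
    hQ.exists_mem_open_inter_of_subset_closure_interior hO hC.le ⟨⟨x, hx⟩, hOC ▸ hfx⟩
  rw [← hOC] at hrOC
  exact ⟨r, hr, hrOC⟩
end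

section
/- Given f : ℝ → ℝ with f(r) ≠ 0 for every rational r ∈ [0,1], the function g_f is pre-continuous: for every open set G ⊆ ℝ, the preimage {x ∈ ℝ : g_f(x) ∈ G} is pre-open, i.e. it is contained in the interior of its closure. -/
/-! `gf f` is invariant under rational translations, so every preimage under it is a union of
cosets of the dense subgroup `ℚ` of `ℝ`: empty or dense, hence pre-open. -/

open Classical in
/-- The function `g_f`. -/
noncomputable def gf (f : ℝ → ℝ) (x : ℝ) : ℝ :=
  if ∃ q : ℚ, x + (q : ℝ) ∈ Set.Icc (0:ℝ) 1 ∧ f (x + (q : ℝ)) = 0 then 1 else 0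

section AddInvariant

variable {G : Type*} [TopologicalSpace G] [AddGroup G] [ContinuousAdd G] {H S : Set G}

theorem Dense.of_add_mem (hH : Dense H) (hS : ∀ x ∈ S, ∀ h ∈ H, x + h ∈ S) (hne : S.Nonempty) :
    Dense S := by
  obtain ⟨x, hx⟩ := hne
  refine (hH.vadd x).mono ?_
  rintro _ ⟨h, hh, rfl⟩
  exact hS x hx h hh

theorem subset_interior_closure_of_add_mem (hH : Dense H) (hS : ∀ x ∈ S, ∀ h ∈ H, x + h ∈ S) :
    S ⊆ interior (closure S) := by
  intro x hx
  rw [(hH.of_add_mem hS ⟨x, hx⟩).closure_eq, interior_univ]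
  trivial

end AddInvariant

theorem gf_add_ratCast (f : ℝ → ℝ) (x : ℝ) (q : ℚ) : gf f (x + q) = gf f x := by
  unfold gf
  congr 1
  refine propext ((Equiv.addLeft q).exists_congr fun q' => ?_)
  simp [add_assoc]

theorem gf_preContinuous_general (f : ℝ → ℝ) :
    ∀ G : Set ℝ, IsOpen G →
      {x : ℝ | gf f x ∈ G} ⊆ interior (closure {x : ℝ | gf f x ∈ G}) := by
  intro G _
  refine subset_interior_closure_of_add_mem Rat.denseRange_cast ?_
  rintro x hx _ ⟨q, rfl⟩
  simpa [gf_add_ratCast] using hx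

theorem gf_preContinuous (f : ℝ → ℝ)
    (hf : ∀ r : ℚ, (r : ℝ) ∈ Set.Icc (0:ℝ) 1 → f r ≠ 0) :
    ∀ G : Set ℝ, IsOpen G →
      {x : ℝ | gf f x ∈ G} ⊆ interior (closure {x : ℝ | gf f x ∈ G}) :=
  gf_preContinuous_general f
end

section
/- Given f : ℝ → ℝ with f(r) ≠ 0 for every rational r ∈ [0,1], the function g_f is 𝒞-continuous: for every open set G ⊆ ℝ, the preimage {x ∈ ℝ : g_f(x) ∈ G} can be written as O ∩ A where O ⊆ ℝ is open and A ⊆ ℝ satisfies A ⊆ interior(closure(A)). -/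
theorem dense_of_forall_add_rat_mem {S : Set ℝ} (hS : ∀ x ∈ S, ∀ r : ℚ, x + r ∈ S)
    (hne : S.Nonempty) : Dense S := by
  obtain ⟨x, hx⟩ := hne
  have hdense : DenseRange (fun r : ℚ => x + r) :=
    (Homeomorph.addLeft x).surjective.denseRange.comp Rat.denseRange_cast (continuous_const_add x)
  exact hdense.mono (Set.range_subset_iff.2 (hS x hx))

theorem subset_interior_closure_of_forall_add_rat_mem {S : Set ℝ}
    (hS : ∀ x ∈ S, ∀ r : ℚ, x + r ∈ S) : S ⊆ interior (closure S) := by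
  rcases S.eq_empty_or_nonempty with rfl | hne
  · exact Set.empty_subset _
  · rw [(dense_of_forall_add_rat_mem hS hne).closure_eq, interior_univ]
    exact Set.subset_univ S

theorem gf_add_rat (f : ℝ → ℝ) (x : ℝ) (r : ℚ) : gf f (x + r) = gf f x := by
  unfold gf
  congr 1
  refine propext ⟨fun ⟨q, hq⟩ => ⟨r + q, ?_⟩, fun ⟨q, hq⟩ => ⟨q - r, ?_⟩⟩
  · rwa [Rat.cast_add, ← add_assoc]
  · rwa [Rat.cast_sub, add_add_sub_cancel]

theorem gf_C_continuous_general (f : ℝ → ℝ) :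
    ∀ G : Set ℝ, IsOpen G →
      ∃ O A : Set ℝ, IsOpen O ∧ A ⊆ interior (closure A) ∧
        {x : ℝ | gf f x ∈ G} = O ∩ A := by
  intro G _
  refine ⟨Set.univ, {x | gf f x ∈ G}, isOpen_univ, ?_, (Set.univ_inter _).symm⟩
  refine subset_interior_closure_of_forall_add_rat_mem fun x hx r => ?_
  rwa [Set.mem_ofPred_eq, gf_add_rat]

theorem gf_C_continuous (f : ℝ → ℝ)
    (hf : ∀ r : ℚ, (r : ℝ) ∈ Set.Icc (0:ℝ) 1 → f r ≠ 0) :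
    ∀ G : Set ℝ, IsOpen G →
      ∃ O A : Set ℝ, IsOpen O ∧ A ⊆ interior (closure A) ∧
        {x : ℝ | gf f x ∈ G} = O ∩ A :=
  gf_C_continuous_general f
end
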